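/- arXiv:math/0010207 — 3 statements merged into one kernel-verified Lean document; each statement's English description precedes it below -/
import Mathlib

section
/- Let a ≥ 1 and N ≥ 2 be integers and let p ∈ ℂ[w] be a polynomial with p(0) = 0 and deg p ≤ a−1. Set μ = min{2a, a + ord(p), ord(p² + w^N)}, with the convention ord(0) = +∞ (so μ is a finite positive integer). Then for all complex numbers c outside a finite subset of ℂ, the w-adic order of the power series (p(w) + c·w^a)² + w^N equals μ. Moreover, if p ≠ 0 or N < 2a, then μ ≤ 2a − 1. -/
/-!
Expanding the square, `(p + c wᵃ)² + wᴺ = (p² + wᴺ) + c · 2wᵃp + c² · w²ᵃ`. For any power series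
`f₀, …, f_d` with least order `k`, the coefficient of `wᵏ` in `∑ cⁱ fᵢ` is a polynomial in `c` whose
`cⁱ`-coefficient is the `k`-th coefficient of `fᵢ`. Some `fᵢ` has order exactly `k`, so this
polynomial is nonzero, and off its finitely many roots `∑ cⁱ fᵢ` has order exactly `k`.
The bound on `μ` comes from `ord p ≤ deg p ≤ a - 1` when `p ≠ 0`, and from `ord (wᴺ) = N` when
`p = 0`.
-/

open PowerSeries

namespace PowerSeries

variable {R ι : Type*}

theorem inf_order_le_order_sum [Semiring R] (s : Finset ι) (f : ι → R⟦X⟧) :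
    s.inf (order ∘ f) ≤ order (∑ i ∈ s, f i) :=
  le_order _ _ fun n hn => by
    rw [map_sum]
    exact Finset.sum_eq_zero fun i hi =>
      coeff_of_lt_order n (hn.trans_le (Finset.inf_le (f := order ∘ f) hi))

theorem exists_finset_forall_notMem_order_sum_C_pow_mul_eq [CommRing R] [IsDomain R]
    (s : Finset ι) {e : ι → ℕ} (he : Set.InjOn e s) (f : ι → R⟦X⟧) :
    ∃ S : Finset R, ∀ c ∉ S, order (∑ i ∈ s, C c ^ e i * f i) = s.inf (order ∘ f) := by
  classical
  have hle (c : R) : s.inf (order ∘ f) ≤ order (∑ i ∈ s, C c ^ e i * f i) :=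
    (Finset.inf_mono_fun fun i _ => by
      rw [Function.comp_apply, Function.comp_apply, ← map_pow, ← smul_eq_C_mul]
      exact le_order_smul).trans (inf_order_le_order_sum s _)
  by_cases htop : s.inf (order ∘ f) = ⊤
  · exact ⟨∅, fun c _ => le_antisymm (htop ▸ le_top) (hle c)⟩
  obtain ⟨i₀, hi₀, hinf⟩ := s.exists_mem_eq_inf
    (Finset.nonempty_iff_ne_empty.2 (by rintro rfl; exact htop Finset.inf_empty)) (order ∘ f)
  obtain ⟨k, hk⟩ := ENat.ne_top_iff_exists.1 htop
  -- the coefficient of `X ^ k` in the sum, as a polynomial in `c`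
  set Q : Polynomial R := ∑ i ∈ s, Polynomial.monomial (e i) (coeff k (f i))
  have hQ : Q ≠ 0 := by
    have hQi₀ : Q.coeff (e i₀) = coeff k (f i₀) := by
      rw [Polynomial.finsetSum_coeff, Finset.sum_eq_single_of_mem i₀ hi₀
        fun i hi hne => by rw [Polynomial.coeff_monomial, if_neg fun h => hne (he hi hi₀ h)]]
      rw [Polynomial.coeff_monomial, if_pos rfl]
    intro h
    rw [h, Polynomial.coeff_zero] at hQi₀
    exact (order_eq_nat.1 (hinf.symm.trans hk.symm)).1 hQi₀.symm
  refine ⟨Q.roots.toFinset, fun c hc => le_antisymm (hk ▸ order_le k ?_) (hle c)⟩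
  have hQc : Q.eval c ≠ 0 := fun h => hc (by simpa [Polynomial.mem_roots hQ] using h)
  simpa [Q, Polynomial.eval_finsetSum, ← map_pow, mul_comm] using hQc

theorem exists_finset_forall_notMem_order_add_C_mul_sq_add_eq [CommRing R] [IsDomain R]
    (h2 : (2 : R) ≠ 0) (φ ψ χ : R⟦X⟧) :
    ∃ S : Finset R, ∀ c ∉ S, order ((φ + C c * ψ) ^ 2 + χ) =
      min (order (φ ^ 2 + χ)) (min (order ψ + order φ) (2 * order ψ)) := by
  let f : Fin 3 → R⟦X⟧ := ![φ ^ 2 + χ, C 2 * ψ * φ, ψ ^ 2]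
  obtain ⟨S, hS⟩ := exists_finset_forall_notMem_order_sum_C_pow_mul_eq Finset.univ
    (fun _ _ _ _ h => Fin.val_injective h) f
  have hsum (c : R) : (φ + C c * ψ) ^ 2 + χ = ∑ i : Fin 3, C c ^ (i : ℕ) * f i := by
    rw [Fin.sum_univ_three]
    change _ = C c ^ 0 * (φ ^ 2 + χ) + C c ^ 1 * (C 2 * ψ * φ) + C c ^ 2 * ψ ^ 2
    rw [map_ofNat]
    ring
  have hinf : Finset.univ.inf (order ∘ f) =
      min (order (φ ^ 2 + χ)) (min (order (C 2 * ψ * φ)) (order (ψ ^ 2))) := by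
    simp [f, Fin.univ_succ]
  have hC2 : order (C (2 : R)) = 0 := by
    rw [← monomial_zero_eq_C_apply, order_monomial_of_ne_zero _ _ h2, Nat.cast_zero]
  refine ⟨S, fun c hc => ?_⟩
  rw [hsum, hS c hc, hinf, order_mul, order_mul, hC2, zero_add, order_pow, nsmul_eq_mul,
    Nat.cast_ofNat]

end PowerSeries

theorem Polynomial.order_coe_le_natDegree {R : Type*} [Semiring R] {p : Polynomial R}
    (hp : p ≠ 0) : (p : PowerSeries R).order ≤ p.natDegree :=
  PowerSeries.order_le _ (by rwa [Polynomial.coeff_coe, ← leadingCoeff, leadingCoeff_ne_zero])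

theorem stmt_2_general (a N : ℕ) (p : Polynomial ℂ) (hpdeg : p.natDegree ≤ a - 1) :
    ∀ μ : ℕ∞,
      μ = min ((2 * a : ℕ) : ℕ∞)
            (min (((a : ℕ∞)) + PowerSeries.order (p : PowerSeries ℂ))
                 (PowerSeries.order ((p : PowerSeries ℂ) ^ 2 + X ^ N))) →
      (∃ S : Finset ℂ, ∀ c : ℂ, c ∉ S →
          PowerSeries.order (((p : PowerSeries ℂ) + PowerSeries.C c * X ^ a) ^ 2 + X ^ N)
            = μ) ∧
      ((p ≠ 0 ∨ N < 2 * a) → μ ≤ ((2 * a - 1 : ℕ) : ℕ∞)) := by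
  rintro μ rfl
  refine ⟨?_, fun h => ?_⟩
  · obtain ⟨S, hS⟩ :=
      exists_finset_forall_notMem_order_add_C_mul_sq_add_eq two_ne_zero (p : ℂ⟦X⟧) (X ^ a) (X ^ N)
    refine ⟨S, fun c hc => ?_⟩
    rw [hS c hc, order_X_pow, Nat.cast_mul, Nat.cast_ofNat]
    ac_rfl
  · rcases eq_or_ne p 0 with rfl | hp
    · have hN : N < 2 * a := h.resolve_left fun h0 => h0 rfl
      calc _ ≤ order (((0 : Polynomial ℂ) : ℂ⟦X⟧) ^ 2 + X ^ N) :=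
            min_le_of_right_le (min_le_right _ _)
        _ = N := by simp [order_X_pow]
        _ ≤ _ := by norm_cast; omega
    · calc _ ≤ (a : ℕ∞) + order (p : ℂ⟦X⟧) := min_le_of_right_le (min_le_left _ _)
        _ ≤ a + p.natDegree := add_le_add_right (Polynomial.order_coe_le_natDegree hp) _
        _ ≤ _ := by norm_cast; omega

/-- For a polynomial p with p(0) = 0 and deg p ≤ a−1, and for general c ∈ ℂ, the w-adic
order of (p(w) + c·wᵃ)² + wᴺ equals μ = min {2a, a + ord p, ord (p² + wᴺ)}; moreover
μ ≤ 2a − 1 if p ≠ 0 or N < 2a. -/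
theorem stmt_2 (a N : ℕ) (ha : 1 ≤ a) (hN : 2 ≤ N) (p : Polynomial ℂ)
    (hp0 : p.coeff 0 = 0) (hpdeg : p.natDegree ≤ a - 1) :
    ∀ μ : ℕ∞,
      μ = min ((2 * a : ℕ) : ℕ∞)
            (min (((a : ℕ∞)) + PowerSeries.order (p : PowerSeries ℂ))
                 (PowerSeries.order ((p : PowerSeries ℂ) ^ 2 + X ^ N))) →
      (∃ S : Finset ℂ, ∀ c : ℂ, c ∉ S →
          PowerSeries.order (((p : PowerSeries ℂ) + PowerSeries.C c * X ^ a) ^ 2 + X ^ N)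
            = μ) ∧
      ((p ≠ 0 ∨ N < 2 * a) → μ ≤ ((2 * a - 1 : ℕ) : ℕ∞)) :=
  stmt_2_general a N p hpdeg
end

section
/- Let a ≥ 2, 1 ≤ l ≤ a−1 and N ≥ 2a be integers, and let t, c ∈ ℂ. Then there is an isomorphism of ℂ-algebras ℂ⟦x,y,w⟧/(x·y + (w^{a−l−1}·(t·x + w^l) + c·w^a)² + w^N) ≅ ℂ⟦x,y,w⟧/(x·y + w^{2a−2}). -/
/-!
Write `x, y, w` for `X 0, X 1, X 2` and `a = l + 1 + m`. Expanding the square gives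
`x y + (w^m (t x + w^l) + c w^a)^2 + w^N = x (y + g) + u w^(2a-2)` with
`g = t² x w^(2m) + 2 t w^(2m+l) (1 + c w)` and `u = (1 + c w)^2 + w^(N-2a+2)`; here `g` and `u`
are polynomials in `x, w` with `g(0) = 0` and `u(0) = 1`. The substitution `y ↦ u⁻¹ (y + g)` is an
automorphism (with inverse `y ↦ u y - g`) sending `x y + w^(2a-2)` to `u⁻¹` times the equation
above, hence it identifies the two quotients.
-/

open MvPowerSeries

theorem map_eq_self_of_mul_eq_one {M F : Type*} [CommMonoid M] [FunLike F M M]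
    [MonoidHomClass F M M] {φ : F} {u v : M} (hu : φ u = u) (huv : u * v = 1) : φ v = v :=
  (left_inv_eq_right_inv (by rwa [mul_comm]) (by rw [← hu, ← map_mul, huv, map_one])).symm

theorem Ideal.nonempty_algEquiv_quotient_span_singleton {R A B : Type*} [CommRing R] [CommRing A]
    [CommRing B] [Algebra R A] [Algebra R B] (e : A ≃ₐ[R] B) {f : A} {g u : B} (hu : IsUnit u)
    (h : e f = u * g) : Nonempty ((A ⧸ Ideal.span {f}) ≃ₐ[R] (B ⧸ Ideal.span {g})) := by
  refine ⟨Ideal.quotientEquivAlg _ _ e ?_⟩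
  rw [Ideal.map_span, Set.image_singleton]
  change _ = Ideal.span {e f}
  rw [h, Ideal.span_singleton_mul_left_unit hu]

namespace MvPowerSeries

variable {σ R : Type*} [CommRing R]

lemma X_mem_adjoin_X_image {s : Set σ} {k : σ} (hk : k ∈ s) :
    (X k : MvPowerSeries σ R) ∈ Algebra.adjoin R (X '' s) :=
  Algebra.subset_adjoin ⟨k, hk, rfl⟩

lemma C_mem_subalgebra (S : Subalgebra R (MvPowerSeries σ R)) (r : R) : C r ∈ S := by
  have := S.algebraMap_mem r
  rwa [MvPowerSeries.algebraMap_apply, Algebra.algebraMap_self, RingHom.id_apply] at this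

lemma subst_eq_self_of_mem_adjoin_X_image {s : Set σ} {a : σ → MvPowerSeries σ R}
    (ha : HasSubst a) (has : ∀ k ∈ s, a k = X k) {p : MvPowerSeries σ R}
    (hp : p ∈ Algebra.adjoin R (X '' s)) : subst a p = p := by
  rw [← substAlgHom_apply ha]
  refine AlgHom.eqOn_adjoin_iff (ψ := AlgHom.id R _).mpr ?_ hp
  rintro _ ⟨k, hk, rfl⟩
  exact (substAlgHom_X ha k).trans (has k hk)

noncomputable def substAlgEquiv {a b : σ → MvPowerSeries σ R} (ha : HasSubst a) (hb : HasSubst b)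
    (hab : ∀ i, subst a (b i) = X i) (hba : ∀ i, subst b (a i) = X i) :
    MvPowerSeries σ R ≃ₐ[R] MvPowerSeries σ R :=
  AlgEquiv.ofAlgHom (substAlgHom ha) (substAlgHom hb)
    (AlgHom.ext fun f => by simp [subst_comp_subst_apply hb ha, funext hab, subst_self])
    (AlgHom.ext fun f => by simp [subst_comp_subst_apply ha hb, funext hba, subst_self])

lemma substAlgEquiv_apply {a b : σ → MvPowerSeries σ R} (ha : HasSubst a) (hb : HasSubst b)
    (hab : ∀ i, subst a (b i) = X i) (hba : ∀ i, subst b (a i) = X i) (f : MvPowerSeries σ R) :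
    substAlgEquiv ha hb hab hba f = subst a f :=
  substAlgHom_apply ha f

theorem nonempty_algEquiv_quotient_X_mul_X_add [Finite σ] [DecidableEq σ] {i j : σ} (hij : i ≠ j)
    {g h u : MvPowerSeries σ R} (hg : g ∈ Algebra.adjoin R (X '' {j}ᶜ))
    (hh : h ∈ Algebra.adjoin R (X '' {j}ᶜ)) (hu : u ∈ Algebra.adjoin R (X '' {j}ᶜ))
    (hg0 : constantCoeff g = 0) (hu_unit : IsUnit u) :
    Nonempty ((MvPowerSeries σ R ⧸ Ideal.span {X i * (X j + g) + u * h}) ≃ₐ[R]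
      (MvPowerSeries σ R ⧸ Ideal.span {X i * X j + h})) := by
  obtain ⟨v, huv⟩ := hu_unit.exists_right_inv
  have hv : ∀ c : σ → MvPowerSeries σ R, HasSubst c → (∀ k ∈ ({j}ᶜ : Set σ), c k = X k) →
      subst c v = v := fun c hc hcX => by
    rw [← substAlgHom_apply hc]
    exact map_eq_self_of_mul_eq_one (by simpa using subst_eq_self_of_mem_adjoin_X_image hc hcX hu) huv
  set a := Function.update (X (R := R)) j (v * (X j + g))
  set b := Function.update (X (R := R)) j (u * X j - g)
  have ha : HasSubst a := hasSubst_of_constantCoeff_zero fun k => by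
    rcases eq_or_ne k j with rfl | hk <;> simp [a, *]
  have hb : HasSubst b := hasSubst_of_constantCoeff_zero fun k => by
    rcases eq_or_ne k j with rfl | hk <;> simp [b, *]
  have haX : ∀ k ∈ ({j}ᶜ : Set σ), a k = X k := fun k hk => Function.update_of_ne hk _ _
  have hbX : ∀ k ∈ ({j}ᶜ : Set σ), b k = X k := fun k hk => Function.update_of_ne hk _ _
  have hab : ∀ k, subst a (b k) = X k := fun k => by
    rcases eq_or_ne k j with rfl | hk
    · simp only [a, b, Function.update_self, subst_sub ha, subst_mul ha, subst_X ha,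
        subst_eq_self_of_mem_adjoin_X_image ha haX hu, subst_eq_self_of_mem_adjoin_X_image ha haX hg]
      linear_combination (X k + g) * huv
    · simp [a, b, hk, subst_X ha]
  have hba : ∀ k, subst b (a k) = X k := fun k => by
    rcases eq_or_ne k j with rfl | hk
    · simp only [a, b, Function.update_self, subst_mul hb, subst_add hb, subst_X hb, hv b hb hbX,
        subst_eq_self_of_mem_adjoin_X_image hb hbX hg, sub_add_cancel]
      linear_combination X k * huv
    · simp [a, b, hk, subst_X hb]
  refine (Ideal.nonempty_algEquiv_quotient_span_singleton (substAlgEquiv ha hb hab hba)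
    (IsUnit.of_mul_eq_one_right u huv) ?_).map AlgEquiv.symm
  simp only [substAlgEquiv_apply, subst_add ha, subst_mul ha, subst_X ha, a,
    Function.update_of_ne hij, Function.update_self, subst_eq_self_of_mem_adjoin_X_image ha haX hh]
  linear_combination (-h) * huv

end MvPowerSeries

theorem mul_add_sq_add_pow_eq {R : Type*} [CommRing R] (x y w t c : R) (l m n : ℕ) :
    x * y + (w ^ m * (t * x + w ^ l) + c * w ^ (l + 1 + m)) ^ 2 + w ^ (2 * (l + m) + n) =
      x * (y + (t ^ 2 * x * w ^ (2 * m) + 2 * t * w ^ (2 * m + l) * (1 + c * w))) +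
        ((1 + c * w) ^ 2 + w ^ n) * w ^ (2 * (l + m)) := by
  ring

theorem stmt_3_general (a l N : ℕ) (hl1 : 1 ≤ l) (hl2 : l ≤ a - 1) (hN : 2 * a ≤ N)
    (t c : ℂ) :
    Nonempty
      ((MvPowerSeries (Fin 3) ℂ ⧸
          Ideal.span ({X 0 * X 1 +
            (X 2 ^ (a - l - 1) * (C (σ := Fin 3) (R := ℂ) t * X 0 + X 2 ^ l) + C (σ := Fin 3) (R := ℂ) c * X 2 ^ a) ^ 2
            + X 2 ^ N} : Set (MvPowerSeries (Fin 3) ℂ))) ≃ₐ[ℂ]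
       (MvPowerSeries (Fin 3) ℂ ⧸
          Ideal.span ({X 0 * X 1 + X 2 ^ (2 * a - 2)} : Set (MvPowerSeries (Fin 3) ℂ)))) := by
  obtain ⟨m, rfl⟩ : ∃ m, a = l + 1 + m := ⟨a - l - 1, by omega⟩
  obtain ⟨n, rfl⟩ : ∃ n, N = 2 * (l + m) + (n + 1) := ⟨N - 2 * (l + m) - 1, by omega⟩
  rw [show l + 1 + m - l - 1 = m by omega, show 2 * (l + 1 + m) - 2 = 2 * (l + m) by omega,
    mul_add_sq_add_pow_eq]
  have hx : (X 0 : MvPowerSeries (Fin 3) ℂ) ∈ Algebra.adjoin ℂ (X '' {1}ᶜ) :=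
    X_mem_adjoin_X_image (by decide)
  have hw : (X 2 : MvPowerSeries (Fin 3) ℂ) ∈ Algebra.adjoin ℂ (X '' {1}ᶜ) :=
    X_mem_adjoin_X_image (by decide)
  refine nonempty_algEquiv_quotient_X_mul_X_add (by decide) ?_ ?_ ?_ ?_ ?_
  iterate 3 aesop (add safe apply C_mem_subalgebra)
  · simp [Nat.one_le_iff_ne_zero.mp hl1]
  · simp [isUnit_iff_constantCoeff]

/-- For a ≥ 2, 1 ≤ l ≤ a−1, N ≥ 2a and t, c ∈ ℂ:
ℂ⟦x,y,w⟧/(xy + (w^{a−l−1}(tx + wˡ) + c·wᵃ)² + wᴺ) ≅ ℂ⟦x,y,w⟧/(xy + w^{2a−2}).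
Variables: x = 0, y = 1, w = 2. -/
theorem stmt_3 (a l N : ℕ) (ha : 2 ≤ a) (hl1 : 1 ≤ l) (hl2 : l ≤ a - 1) (hN : 2 * a ≤ N)
    (t c : ℂ) :
    Nonempty
      ((MvPowerSeries (Fin 3) ℂ ⧸
          Ideal.span ({X 0 * X 1 +
            (X 2 ^ (a - l - 1) * (C (σ := Fin 3) (R := ℂ) t * X 0 + X 2 ^ l) + C (σ := Fin 3) (R := ℂ) c * X 2 ^ a) ^ 2
            + X 2 ^ N} : Set (MvPowerSeries (Fin 3) ℂ))) ≃ₐ[ℂ]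
       (MvPowerSeries (Fin 3) ℂ ⧸
          Ideal.span ({X 0 * X 1 + X 2 ^ (2 * a - 2)} : Set (MvPowerSeries (Fin 3) ℂ)))) :=
  stmt_3_general a l N hl1 hl2 hN t c
end

section
/- Let r ≥ 1 and i ≥ 1 be integers. Then min over j ∈ {0, 1, …, i−1} of j·((1+j)·r − 2i) equals 2·(i − Σ_{s=0}^{i−1} (⌊s/r⌋ + 1)). Equivalently, i − (1/2)·min_{0≤j≤i−1} (j·((1+j)·r − 2i)) = Σ_{s=0}^{i−1} (⌊s/r⌋ + 1). -/
/-- Closed form for twice the sum of floors. -/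
lemma sum_div_formula (r : ℕ) (hr : 1 ≤ r) (i : ℕ) :
    2 * (∑ s ∈ Finset.range i, ((s / r : ℕ) : ℤ)) =
      (r : ℤ) * ((i / r : ℕ) : ℤ) * (((i / r : ℕ) : ℤ) - 1)
        + 2 * ((i / r : ℕ) : ℤ) * ((i % r : ℕ) : ℤ) := by
  induction i with
  | zero => simp [Nat.zero_div]
  | succ n ih =>
    rw [Finset.sum_range_succ]
    have hq := Nat.div_add_mod n r
    have ht : n % r < r := Nat.mod_lt _ hr
    have hn1 : n + 1 = n % r + 1 + r * (n / r) := by omega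
    by_cases h : n % r + 1 < r
    · have hd : (n + 1) / r = n / r := by
        rw [hn1, Nat.add_mul_div_left _ _ hr, Nat.div_eq_of_lt h, Nat.zero_add]
      have hm : (n + 1) % r = n % r + 1 := by
        rw [hn1, Nat.add_mul_mod_self_left, Nat.mod_eq_of_lt h]
      have hc : ((n % r + 1 : ℕ) : ℤ) = ((n % r : ℕ) : ℤ) + 1 := by push_cast; ring
      rw [hd, hm, hc]
      linear_combination ih
    · have ht1 : n % r + 1 = r := by omega
      have hd : (n + 1) / r = n / r + 1 := by
        rw [hn1, Nat.add_mul_div_left _ _ hr, ht1, Nat.div_self hr]; omega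
      have hm : (n + 1) % r = 0 := by
        rw [hn1, Nat.add_mul_mod_self_left, ht1, Nat.mod_self]
      have ht1' : ((n % r : ℕ) : ℤ) + 1 = (r : ℤ) := by exact_mod_cast ht1
      have hc2 : ((n / r + 1 : ℕ) : ℤ) = ((n / r : ℕ) : ℤ) + 1 := by push_cast; ring
      rw [hd, hm, hc2, Nat.cast_zero]
      linear_combination ih + 2 * ((n / r : ℕ) : ℤ) * ht1'

/-- For integers r ≥ 1 and i ≥ 1,
min_{0 ≤ j ≤ i−1} j·((1+j)·r − 2i) = 2·(i − Σ_{s=0}^{i−1} (⌊s/r⌋ + 1)). -/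
theorem stmt_8 (r i : ℕ) (hr : 1 ≤ r) (hi : 1 ≤ i) :
    IsLeast {v : ℤ | ∃ j : ℕ, j ≤ i - 1 ∧ v = (j : ℤ) * ((1 + j) * r - 2 * i)}
      (2 * ((i : ℤ) - ∑ s ∈ Finset.range i, ((s / r : ℕ) + 1 : ℤ))) := by
  have hsum : (∑ s ∈ Finset.range i, ((s / r : ℕ) + 1 : ℤ))
      = (∑ s ∈ Finset.range i, ((s / r : ℕ) : ℤ)) + i := by
    rw [Finset.sum_add_distrib, Finset.sum_const, Finset.card_range]
    simp [mul_comm]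
  set Q : ℤ := ((i / r : ℕ) : ℤ) with hQ
  set T : ℤ := ((i % r : ℕ) : ℤ) with hT
  have hieq : (i : ℤ) = (r : ℤ) * Q + T := by
    rw [hQ, hT]; exact_mod_cast (Nat.div_add_mod i r).symm
  have hT0 : 0 ≤ T := by positivity
  have hTr : T < (r : ℤ) := by rw [hT]; exact_mod_cast Nat.mod_lt i hr
  have hQ0 : 0 ≤ Q := by positivity
  have hform := sum_div_formula r hr i
  have htarget : 2 * ((i : ℤ) - ∑ s ∈ Finset.range i, ((s / r : ℕ) + 1 : ℤ))
      = -((r : ℤ) * Q * (Q - 1) + 2 * Q * T) := by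
    rw [hsum]
    linear_combination -hform
  constructor
  · -- membership: witness j
    rw [Set.mem_setOf_eq, htarget]
    by_cases hcase : i / r ≤ i - 1
    · exact ⟨i / r, hcase, by rw [hieq, ← hQ]; ring⟩
    · -- then i / r ≥ i, forcing r = 1, i / r = i, i % r = 0
      have hle : i / r ≤ i := Nat.div_le_self i r
      have heq : i / r = i := by omega
      have hr1 : r = 1 := by
        by_contra hne
        have h2 : 2 ≤ r := by omega
        have : i / r < i := Nat.div_lt_self (by omega) h2
        omega
      have hT0' : i % r = 0 := by rw [hr1]; exact Nat.mod_one i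
      refine ⟨i - 1, le_refl _, ?_⟩
      have hi1 : ((i - 1 : ℕ) : ℤ) = (i : ℤ) - 1 := by
        have : (1 : ℕ) ≤ i := hi
        push_cast [Nat.cast_sub this]
        ring
      have hQi : Q = (i : ℤ) := by rw [hQ, heq]
      have hTz : T = 0 := by rw [hT, hT0']; simp
      rw [hi1, hQi, hTz, hr1]
      push_cast
      ring
  · -- lower bound
    rintro v ⟨j, hj, rfl⟩
    rw [htarget]
    have hji : (j : ℤ) ≤ (i : ℤ) - 1 := by
      have : j ≤ i - 1 := hj
      omega
    have hprod : 0 ≤ ((j : ℤ) - Q) * ((r : ℤ) * ((j : ℤ) - Q) + (r : ℤ) - 2 * T) := by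
      rcases le_or_gt Q (j : ℤ) with h | h
      · rcases eq_or_lt_of_le h with h' | h'
        · rw [← h']; simp
        · have h1 : (0 : ℤ) ≤ (j : ℤ) - Q := by linarith
          have h2 : (1 : ℤ) ≤ (j : ℤ) - Q := by linarith
          have : 0 ≤ (r : ℤ) * ((j : ℤ) - Q) + (r : ℤ) - 2 * T := by nlinarith
          exact mul_nonneg h1 this
      · have h1 : (j : ℤ) - Q ≤ -1 := by linarith
        have h2 : (r : ℤ) * ((j : ℤ) - Q) + (r : ℤ) - 2 * T ≤ 0 := by nlinarith
        have h3 := mul_nonneg (neg_nonneg.mpr (show (j : ℤ) - Q ≤ 0 by linarith))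
          (neg_nonneg.mpr h2)
        nlinarith [h3]
    rw [hieq]
    nlinarith [hprod]
end
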